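/- Let G be a group and S a nonempty set of subgroups of G closed under conjugation such that any two members A ≤ B of S are conjugate. Let E be the set of subgroups contained in some member of S, and call H ∈ E vertical if every K ∈ E containing H has a conjugate contained in H; define H ~ K if some conjugate of H lies in K. Then every member of S is vertical, and the map sending A ∈ S to its ~-equivalence class induces a bijection between conjugacy classes of members of S and ~-equivalence classes of vertical subgroups. -/
import Mathlib


/-- The conjugate subgroup `g⁻¹ H g`. -/
def conjSubgroup {G : Type*} [Group G] (H : Subgroup G) (g : G) : Subgroup G :=
  H.map (MulAut.conj g⁻¹).toMonoidHom

/-- `H` is vertical with respect to the family of elliptic subgroups determined by `S`: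
`H` is elliptic and every elliptic subgroup containing `H` has a conjugate contained
in `H`. -/
def IsVertical {G : Type*} [Group G] (S : Set (Subgroup G)) (H : Subgroup G) : Prop :=
  (∃ A ∈ S, H ≤ A) ∧
    ∀ K : Subgroup G, (∃ A ∈ S, K ≤ A) → H ≤ K → ∃ g : G, conjSubgroup K g ≤ H

section aux

variable {G : Type*} [Group G]

lemma mem_conjSubgroup {H : Subgroup G} {g x : G} :
    x ∈ conjSubgroup H g ↔ g * x * g⁻¹ ∈ H := by
  rw [conjSubgroup, show (MulAut.conj g⁻¹).toMonoidHom = ((MulAut.conj g⁻¹ : G ≃* G)).toMonoidHom from rfl]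
  rw [Subgroup.mem_map_equiv]
  rw [← MulAut.inv_def]
  simp [MulAut.conj_inv_apply, mul_assoc]

lemma conjSubgroup_conjSubgroup (H : Subgroup G) (a b : G) :
    conjSubgroup (conjSubgroup H a) b = conjSubgroup H (a * b) := by
  ext x
  simp only [mem_conjSubgroup, mul_inv_rev, mul_assoc]

lemma conjSubgroup_one (H : Subgroup G) : conjSubgroup H 1 = H := by
  ext x; simp [mem_conjSubgroup]

lemma conjSubgroup_mono {H K : Subgroup G} (h : H ≤ K) (g : G) :
    conjSubgroup H g ≤ conjSubgroup K g :=
  Subgroup.map_mono h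

lemma isVertical_conj {S : Set (Subgroup G)}
    (hconj : ∀ A ∈ S, ∀ g : G, conjSubgroup A g ∈ S)
    {H : Subgroup G} (hH : IsVertical S H) (g : G) : IsVertical S (conjSubgroup H g) := by
  obtain ⟨⟨A, hA, hHA⟩, hv⟩ := hH
  refine ⟨⟨conjSubgroup A g, hconj A hA g, conjSubgroup_mono hHA g⟩, ?_⟩
  rintro K ⟨B, hB, hKB⟩ hle
  have h1 : H ≤ conjSubgroup K g⁻¹ := by
    have := conjSubgroup_mono hle g⁻¹
    rwa [conjSubgroup_conjSubgroup, mul_inv_cancel, conjSubgroup_one] at this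
  obtain ⟨h, hh⟩ := hv (conjSubgroup K g⁻¹)
    ⟨conjSubgroup B g⁻¹, hconj B hB g⁻¹, conjSubgroup_mono hKB g⁻¹⟩ h1
  refine ⟨g⁻¹ * h * g, ?_⟩
  have := conjSubgroup_mono hh g
  rwa [conjSubgroup_conjSubgroup, conjSubgroup_conjSubgroup, ← mul_assoc] at this

end aux

/-- With `S` nonempty, conjugation-closed and fully reduced, every member of
`S` is vertical, and `A ↦ A` induces a bijection between conjugacy classes of members of
`S` and `~`-equivalence classes of vertical subgroups, where `H ~ K` iff some conjugate
of `H` lies in `K`. -/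
theorem stmt_7 {G : Type*} [Group G] (S : Set (Subgroup G)) (hne : S.Nonempty)
    (hconj : ∀ A ∈ S, ∀ g : G, conjSubgroup A g ∈ S)
    (hfr : ∀ A ∈ S, ∀ B ∈ S, A ≤ B → ∃ g : G, conjSubgroup A g = B) :
    (∀ A ∈ S, IsVertical S A) ∧
    ∃ e : Quot (fun (A B : {A : Subgroup G // A ∈ S}) =>
            ∃ g : G, conjSubgroup (A : Subgroup G) g = (B : Subgroup G)) ≃
          Quot (fun (H K : {H : Subgroup G // IsVertical S H}) =>
            ∃ g : G, conjSubgroup (H : Subgroup G) g ≤ (K : Subgroup G)),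
      ∀ (A : {A : Subgroup G // A ∈ S}) (H : {H : Subgroup G // IsVertical S H}),
        e (Quot.mk _ A) = Quot.mk _ H ↔
          ∃ g : G, conjSubgroup (A : Subgroup G) g ≤ (H : Subgroup G) := by
  -- every member of S is vertical
  have hvert : ∀ A ∈ S, IsVertical S A := by
    intro A hA
    refine ⟨⟨A, hA, le_rfl⟩, ?_⟩
    rintro K ⟨B, hB, hKB⟩ hAK
    obtain ⟨g, hg⟩ := hfr A hA B hB (hAK.trans hKB)
    refine ⟨g⁻¹, ?_⟩
    have : conjSubgroup K g⁻¹ ≤ conjSubgroup B g⁻¹ := conjSubgroup_mono hKB g⁻¹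
    rwa [← hg, conjSubgroup_conjSubgroup, mul_inv_cancel, conjSubgroup_one] at this
  refine ⟨hvert, ?_⟩
  set rS := fun (A B : {A : Subgroup G // A ∈ S}) =>
      ∃ g : G, conjSubgroup (A : Subgroup G) g = (B : Subgroup G) with hrS
  set rV := fun (H K : {H : Subgroup G // IsVertical S H}) =>
      ∃ g : G, conjSubgroup (H : Subgroup G) g ≤ (K : Subgroup G) with hrV
  -- rV is an equivalence relation
  have hequiv : Equivalence rV := by
    constructor
    · intro H; exact ⟨1, by rw [conjSubgroup_one]⟩
    · rintro H K ⟨g, hg⟩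
      have hHg : IsVertical S (conjSubgroup (H : Subgroup G) g) := isVertical_conj hconj H.2 g
      obtain ⟨h, hh⟩ := hHg.2 (K : Subgroup G) K.2.1 hg
      refine ⟨h * g⁻¹, ?_⟩
      have := conjSubgroup_mono hh g⁻¹
      rwa [conjSubgroup_conjSubgroup, conjSubgroup_conjSubgroup, mul_inv_cancel,
        conjSubgroup_one] at this
    · rintro H K L ⟨g, hg⟩ ⟨k, hk⟩
      refine ⟨g * k, ?_⟩
      rw [← conjSubgroup_conjSubgroup]
      exact le_trans (conjSubgroup_mono hg k) hk
  -- the forward map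
  let f : Quot rS → Quot rV :=
    Quot.lift (fun A => Quot.mk rV ⟨(A : Subgroup G), hvert A.1 A.2⟩)
      (by
        rintro A B ⟨g, hg⟩
        exact Quot.sound ⟨g, le_of_eq hg⟩)
  have key : ∀ (A : {A : Subgroup G // A ∈ S}) (H : {H : Subgroup G // IsVertical S H}),
      f (Quot.mk rS A) = Quot.mk rV H ↔
        ∃ g : G, conjSubgroup (A : Subgroup G) g ≤ (H : Subgroup G) := by
    intro A H
    show Quot.mk rV _ = Quot.mk rV H ↔ _
    rw [Quot.eq, Equivalence.eqvGen_iff hequiv]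
  have hbij : Function.Bijective f := by
    constructor
    · intro x y
      induction x using Quot.ind with | _ A =>
      induction y using Quot.ind with | _ B =>
      intro hxy
      have : rV ⟨(A : Subgroup G), hvert A.1 A.2⟩ ⟨(B : Subgroup G), hvert B.1 B.2⟩ := by
        rw [← Equivalence.eqvGen_iff hequiv, ← Quot.eq]
        exact hxy
      obtain ⟨g, hg⟩ := this
      obtain ⟨h, hh⟩ := hfr (conjSubgroup (A : Subgroup G) g) (hconj A.1 A.2 g) B.1 B.2 hg
      exact Quot.sound ⟨g * h, by rwa [← conjSubgroup_conjSubgroup]⟩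
    · intro y
      induction y using Quot.ind with | _ H =>
      obtain ⟨A, hA, hHA⟩ := H.2.1
      refine ⟨Quot.mk rS ⟨A, hA⟩, ?_⟩
      show Quot.mk rV _ = Quot.mk rV H
      refine Quot.sound ?_
      exact H.2.2 A ⟨A, hA, le_rfl⟩ hHA
  refine ⟨Equiv.ofBijective f hbij, ?_⟩
  intro A H
  rw [Equiv.ofBijective_apply]
  exact key A H
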